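/- arXiv:1201.5143 — 7 statements merged into one kernel-verified Lean document; each statement's English description precedes it below -/
import Mathlib

section
/- Let c₁, …, c_N ∈ ℂ be pairwise distinct and let R be a polynomial. Define V(z) = Σ_{k=1}^N 1/(z − c_k) + R(z). Then the function r(z) = V(z)² + V'(z) extends to a polynomial (has no poles) if and only if for every k, R(c_k) + Σ_{l ≠ k} 1/(c_k − c_l) = 0. -/
/-!
Off the poles, partial fractions give `V² + V' = B + ∑ₖ 2 Aₖ / (z - cₖ)` with `B` a polynomial:
the double poles of `V²` cancel against those of `V'`, and each cross term
`1 / ((z - cₖ)(z - cₗ))` splits into simple poles at `cₖ` and `cₗ`, while `R(z) / (z - cₖ)` is a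
polynomial plus `R(cₖ) / (z - cₖ)`. A polynomial plus simple poles at distinct points agrees with
a polynomial off those points only if every residue vanishes: clear denominators and evaluate
at `cₖ`.
-/

open Finset Polynomial Topology

section PartialFractions

variable {K : Type*} [Field K] {ι : Type*} [Fintype ι] [DecidableEq ι] {c : ι → K}

theorem inv_sub_mul_inv_sub {a b z : K} (hab : a ≠ b) (ha : z ≠ a) (hb : z ≠ b) :
    (z - a)⁻¹ * (z - b)⁻¹ = (a - b)⁻¹ * (z - a)⁻¹ + (b - a)⁻¹ * (z - b)⁻¹ := by
  have := sub_ne_zero.2 hab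
  have := sub_ne_zero.2 ha
  have := sub_ne_zero.2 hb
  field_simp
  ring

theorem sq_sum_inv_sub (hc : Function.Injective c) {z : K} (hz : ∀ k, z ≠ c k) :
    (∑ k, (z - c k)⁻¹) ^ 2
      = ∑ k, (z - c k)⁻¹ ^ 2 + 2 * ∑ k, (∑ l ∈ univ.erase k, (c k - c l)⁻¹) * (z - c k)⁻¹ := by
  set f : ι → ι → K := fun k l => (c k - c l)⁻¹ * (z - c k)⁻¹
  have hoff : ∀ k, ∑ l ∈ univ.erase k, (z - c k)⁻¹ * (z - c l)⁻¹
      = ∑ l ∈ univ.erase k, (f k l + f l k) := fun k =>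
    sum_congr rfl fun l hl =>
      inv_sub_mul_inv_sub (hc.ne (ne_of_mem_erase hl).symm) (hz k) (hz l)
  have hswap : ∑ k, ∑ l ∈ univ.erase k, f l k = ∑ k, ∑ l ∈ univ.erase k, f k l :=
    sum_comm' fun k l => by simp [ne_comm]
  calc (∑ k, (z - c k)⁻¹) ^ 2 = ∑ k, ∑ l, (z - c k)⁻¹ * (z - c l)⁻¹ := by
        rw [sq, sum_mul_sum]
    _ = ∑ k, ((z - c k)⁻¹ ^ 2 + ∑ l ∈ univ.erase k, (z - c k)⁻¹ * (z - c l)⁻¹) :=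
        sum_congr rfl fun k _ => by rw [← add_sum_erase _ _ (mem_univ k), sq]
    _ = _ := by
        simp only [sum_add_distrib, hoff, hswap, two_mul, f, sum_mul]

theorem eval_mul_inv_sub (p : K[X]) {a z : K} (hz : z ≠ a) :
    p.eval z * (z - a)⁻¹ = (p /ₘ (X - C a)).eval z + p.eval a * (z - a)⁻¹ := by
  have h := congrArg (eval z) (modByMonic_add_div p (X - C a))
  rw [modByMonic_X_sub_C_eq_C_eval] at h
  simp only [eval_add, eval_C, eval_mul, eval_sub, eval_X] at h
  have := sub_ne_zero.2 hz
  field_simp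
  linear_combination -h

theorem eq_zero_of_sum_mul_inv_sub_eq_eval [Infinite K] (hc : Function.Injective c)
    {a : ι → K} {P : K[X]} (h : ∀ z, (∀ k, z ≠ c k) → ∑ k, a k * (z - c k)⁻¹ = P.eval z)
    (k : ι) : a k = 0 := by
  set F : K[X] := P * ∏ j, (X - C (c j)) - ∑ l, C (a l) * ∏ j ∈ univ.erase l, (X - C (c j))
  have hF : F = 0 := by
    refine eq_zero_of_infinite_isRoot F ((Set.finite_range c).infinite_compl.mono ?_)
    intro z hz
    have hz : ∀ k, z ≠ c k := fun k hk => hz ⟨k, hk.symm⟩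
    simp only [F, Set.mem_ofPred_eq, IsRoot, eval_sub, eval_mul, eval_prod, eval_finsetSum,
      eval_C, eval_X]
    rw [← h z hz, sum_mul, sub_eq_zero]
    refine sum_congr rfl fun l _ => ?_
    rw [← mul_prod_erase _ _ (mem_univ l)]
    have := sub_ne_zero.2 (hz l)
    field_simp
  have := congrArg (eval (c k)) hF
  simp only [F, eval_sub, eval_mul, eval_prod, eval_finsetSum, eval_C, eval_X, eval_zero] at this
  rw [prod_eq_zero (mem_univ k) (sub_self _), mul_zero, zero_sub, neg_eq_zero,
    sum_eq_single k (fun l _ hlk => ?_) (by simp)] at this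
  · refine (mul_eq_zero.1 this).resolve_right (prod_ne_zero_iff.2 fun j hj => ?_)
    exact sub_ne_zero.2 (hc.ne (ne_of_mem_erase hj).symm)
  · exact mul_eq_zero_of_right _ (prod_eq_zero (mem_erase.2 ⟨hlk.symm, mem_univ k⟩) (sub_self _))

end PartialFractions

section Riccati

variable {𝕜 : Type*} [NontriviallyNormedField 𝕜] {ι : Type*} [Fintype ι] {c : ι → 𝕜}

theorem hasDerivAt_sum_inv_sub_add_eval (R : 𝕜[X]) {z : 𝕜} (hz : ∀ k, z ≠ c k) :
    HasDerivAt (fun w => ∑ k, (w - c k)⁻¹ + R.eval w)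
      (-∑ k, (z - c k)⁻¹ ^ 2 + R.derivative.eval z) z := by
  rw [← sum_neg_distrib]
  refine .add (.fun_sum fun k _ => ?_) (R.hasDerivAt z)
  simpa [neg_div] using ((hasDerivAt_id z).sub_const (c k)).fun_inv (sub_ne_zero.2 (hz k))

theorem deriv_eq_of_eq_sum_inv_sub_add_eval {R : 𝕜[X]} {V : 𝕜 → 𝕜}
    (hV : ∀ z, (∀ k, z ≠ c k) → V z = ∑ k, (z - c k)⁻¹ + R.eval z) {z : 𝕜}
    (hz : ∀ k, z ≠ c k) :
    deriv V z = -∑ k, (z - c k)⁻¹ ^ 2 + R.derivative.eval z := by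
  have hopen : IsOpen {w | ∀ k, w ≠ c k} := by
    convert (Set.finite_range c).isClosed.isOpen_compl
    ext w
    simp [eq_comm]
  have hVeq : V =ᶠ[𝓝 z] fun w => ∑ k, (w - c k)⁻¹ + R.eval w :=
    Filter.eventuallyEq_of_mem (hopen.mem_nhds hz) hV
  rw [hVeq.deriv_eq, (hasDerivAt_sum_inv_sub_add_eval R hz).deriv]

variable [DecidableEq ι]

/-- Half the residue of `V² + V'` at `c k`. -/
def riccatiResidue (c : ι → 𝕜) (R : 𝕜[X]) (k : ι) : 𝕜 :=
  R.eval (c k) + ∑ l ∈ univ.erase k, (c k - c l)⁻¹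

theorem sq_add_deriv_eq_of_eq_sum_inv_sub_add_eval (hc : Function.Injective c) {R : 𝕜[X]}
    {V : 𝕜 → 𝕜} (hV : ∀ z, (∀ k, z ≠ c k) → V z = ∑ k, (z - c k)⁻¹ + R.eval z) {z : 𝕜}
    (hz : ∀ k, z ≠ c k) :
    V z ^ 2 + deriv V z
      = (R ^ 2 + derivative R + 2 * ∑ k, R /ₘ (X - C (c k))).eval z
        + ∑ k, 2 * riccatiResidue c R k * (z - c k)⁻¹ := by
  have hR : R.eval z * ∑ k, (z - c k)⁻¹
      = ∑ k, (R /ₘ (X - C (c k))).eval z + ∑ k, R.eval (c k) * (z - c k)⁻¹ := by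
    rw [mul_sum, ← sum_add_distrib]
    exact sum_congr rfl fun k _ => eval_mul_inv_sub R (hz k)
  rw [hV z hz, deriv_eq_of_eq_sum_inv_sub_add_eval hV hz]
  simp only [riccatiResidue, eval_add, eval_mul, eval_pow, eval_finsetSum, eval_ofNat]
  simp only [add_mul, mul_add, sum_add_distrib, mul_assoc, ← mul_sum]
  linear_combination sq_sum_inv_sub hc hz + 2 * hR

end Riccati

/-- For V(z) = Σₖ 1/(z−cₖ) + R(z) with the cₖ pairwise distinct, V² + V' extends to a
polynomial iff R(cₖ) + Σ_{l≠k} 1/(cₖ−c_l) = 0 for every k. -/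
theorem riccati_pole_cancellation_iff (N : ℕ) (c : Fin N → ℂ)
    (hc : Function.Injective c) (R : Polynomial ℂ) (V : ℂ → ℂ)
    (hV : ∀ z : ℂ, (∀ k, z ≠ c k) → V z = (∑ k, 1 / (z - c k)) + R.eval z) :
    (∃ Q : Polynomial ℂ, ∀ z : ℂ, (∀ k, z ≠ c k) →
        V z ^ 2 + deriv V z = Q.eval z) ↔
      ∀ k : Fin N,
        R.eval (c k) + ∑ l ∈ univ.filter (fun l => l ≠ k), 1 / (c k - c l) = 0 := by
  simp only [one_div, filter_ne'] at hV ⊢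
  change _ ↔ ∀ k, riccatiResidue c R k = 0
  set B : ℂ[X] := R ^ 2 + derivative R + 2 * ∑ k, R /ₘ (X - C (c k))
  have hId : ∀ z, (∀ k, z ≠ c k) →
      V z ^ 2 + deriv V z = B.eval z + ∑ k, 2 * riccatiResidue c R k * (z - c k)⁻¹ :=
    fun z => sq_add_deriv_eq_of_eq_sum_inv_sub_add_eval hc hV
  constructor
  · rintro ⟨Q, hQ⟩ k
    refine (mul_eq_zero.1 (eq_zero_of_sum_mul_inv_sub_eq_eval hc
      (a := fun k => 2 * riccatiResidue c R k) (P := Q - B) (fun z hz => ?_) k)).resolve_left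
      two_ne_zero
    rw [eval_sub, ← hQ z hz, hId z hz, add_sub_cancel_left]
  · intro hA
    refine ⟨B, fun z hz => ?_⟩
    simp only [hId z hz, hA, mul_zero, zero_mul, sum_const_zero, add_zero]
end

section
/- Let m, α ∈ ℂ and let P be a polynomial of degree d with P(0) ≠ 0 satisfying the associated Laguerre-type equation z P''(z) + 2(α + m z) P'(z) = 2 m d · P(z). Define V(z) = m + α/z + P'(z)/P(z). Then for all z with z ≠ 0 and P(z) ≠ 0, V(z)² + V'(z) = m² + α(α−1)/z² + 2m(α+d)/z. -/
/-! Expanding `V² + V'` for `V = m + α/z + P'/P`, the `(P'/P)²` terms cancel and what remains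
besides `m² + α(α-1)/z² + 2mα/z` is `(z P'' + 2(α + m z) P') / (z P)`, which the equation
turns into `2 m d / z`. -/

open Polynomial Filter Topology

section

variable {𝕜 : Type*} [NontriviallyNormedField 𝕜]

noncomputable def potential (m α : 𝕜) (P : 𝕜[X]) (w : 𝕜) : 𝕜 :=
  m + α / w + P.derivative.eval w / P.eval w

theorem hasDerivAt_potential (m α : 𝕜) (P : 𝕜[X]) {z : 𝕜} (hz : z ≠ 0) (hP : P.eval z ≠ 0) :
    HasDerivAt (potential m α P)
      (-α / z ^ 2 + (P.derivative.derivative.eval z * P.eval z - P.derivative.eval z ^ 2)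
        / P.eval z ^ 2) z := by
  have hpole : HasDerivAt (fun w => α / w) (-α / z ^ 2) z := by
    simpa [div_eq_mul_inv, neg_div] using (hasDerivAt_inv hz).const_mul α
  have hlog := (P.derivative.hasDerivAt z).div (P.hasDerivAt z) hP
  exact ((hasDerivAt_const z m).add hpole).add hlog |>.congr_deriv (by ring)

theorem potential_sq_add_deriv (m α : 𝕜) (P : 𝕜[X]) {z : 𝕜} (hz : z ≠ 0) (hP : P.eval z ≠ 0) :
    potential m α P z ^ 2 + deriv (potential m α P) z =
      m ^ 2 + α * (α - 1) / z ^ 2 + 2 * m * α / z +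
        (z * P.derivative.derivative.eval z + 2 * (α + m * z) * P.derivative.eval z)
          / (z * P.eval z) := by
  rw [(hasDerivAt_potential m α P hz hP).deriv, potential]
  field_simp
  ring

end

theorem riccati_whittaker_reduction_general (m α : ℂ) (d : ℕ) (P : Polynomial ℂ)
    (hODE : ∀ z : ℂ,
      z * (P.derivative.derivative).eval z + 2 * (α + m * z) * P.derivative.eval z
        = 2 * m * d * P.eval z)
    (V : ℂ → ℂ)
    (hV : ∀ z : ℂ, z ≠ 0 → P.eval z ≠ 0 →
      V z = m + α / z + P.derivative.eval z / P.eval z) :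
    ∀ z : ℂ, z ≠ 0 → P.eval z ≠ 0 →
      V z ^ 2 + deriv V z = m ^ 2 + α * (α - 1) / z ^ 2 + 2 * m * (α + d) / z := by
  intro z hz hPz
  have hVloc : V =ᶠ[𝓝 z] potential m α P := by
    have hopen : IsOpen {w : ℂ | w ≠ 0 ∧ P.eval w ≠ 0} :=
      isOpen_ne.inter (isOpen_ne.preimage P.continuous)
    filter_upwards [hopen.mem_nhds ⟨hz, hPz⟩] with w hw
    exact hV w hw.1 hw.2
  rw [hVloc.deriv_eq, hVloc.eq_of_nhds, potential_sq_add_deriv m α P hz hPz, hODE z]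
  field_simp
  ring

/-- If P is a polynomial of degree d with P(0) ≠ 0 satisfying
zP'' + 2(α+mz)P' = 2md·P, then the potential V = m + α/z + P'/P satisfies
V² + V' = m² + α(α−1)/z² + 2m(α+d)/z away from z = 0 and the roots of P. -/
theorem riccati_whittaker_reduction (m α : ℂ) (d : ℕ) (P : Polynomial ℂ)
    (hd : P.natDegree = d) (hP0 : P.eval 0 ≠ 0)
    (hODE : ∀ z : ℂ,
      z * (P.derivative.derivative).eval z + 2 * (α + m * z) * P.derivative.eval z
        = 2 * m * d * P.eval z)
    (V : ℂ → ℂ)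
    (hV : ∀ z : ℂ, z ≠ 0 → P.eval z ≠ 0 →
      V z = m + α / z + P.derivative.eval z / P.eval z) :
    ∀ z : ℂ, z ≠ 0 → P.eval z ≠ 0 →
      V z ^ 2 + deriv V z = m ^ 2 + α * (α - 1) / z ^ 2 + 2 * m * (α + d) / z :=
  riccati_whittaker_reduction_general m α d P hODE V hV
end

section
/- Let g be a solution of the associated Laguerre equation u g''(u) + (α + 1/2 − u) g'(u) = (E²/(4λ)) g(u), define u = −λ z² and ψ(z) = z^α e^{−u/2} g(u) (for λ ≠ 0, z ≠ 0, fixed branch of z^α). Then ψ satisfies ψ''(z) = (V(z)² + V'(z) − E²) ψ(z) where V(z) = α/z + λ z. -/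
/-!
Writing `ψ = exp Φ · f` with `Φ' = V`, one has `ψ'' = exp Φ · (f'' + 2 V f' + (V' + V²) f)`,
so the equation for `ψ` is equivalent to `f'' + 2 V f' + E² f = 0`. For `f(z) = g(-λz²)` the
chain rule turns the left-hand side into `E² g(u) - 4λ (u g''(u) + (α + 1/2 - u) g'(u))`,
which vanishes by the Laguerre equation.
-/

open Complex Filter Topology

theorem HasDerivAt.comp_const_mul_sq {𝕜 : Type*} [NontriviallyNormedField 𝕜] {g : 𝕜 → 𝕜}
    {g' : 𝕜} (c x : 𝕜) (hg : HasDerivAt g g' (c * x ^ 2)) :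
    HasDerivAt (fun y => g (c * y ^ 2)) (2 * c * x * g') x := by
  have := hg.comp x ((hasDerivAt_pow 2 x).const_mul c)
  exact this.congr_deriv (by push_cast; ring)

theorem HasDerivAt.mul_comp_const_mul_sq {𝕜 : Type*} [NontriviallyNormedField 𝕜]
    {g' : 𝕜 → 𝕜} {g'' : 𝕜} (c x : 𝕜) (hg' : HasDerivAt g' g'' (c * x ^ 2)) :
    HasDerivAt (fun y => 2 * c * y * g' (c * y ^ 2))
      (2 * c * g' (c * x ^ 2) + (2 * c * x) ^ 2 * g'') x :=
  (((hasDerivAt_id x).const_mul (2 * c)).mul (hg'.comp_const_mul_sq c x)).congr_deriv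
    (by simp only [id, mul_one]; ring)

theorem hasDerivAt_div_add_mul {𝕜 : Type*} [NontriviallyNormedField 𝕜] (a b : 𝕜) {x : 𝕜}
    (hx : x ≠ 0) : HasDerivAt (fun y => a / y + b * y) (-a / x ^ 2 + b) x := by
  have := ((hasDerivAt_inv hx).const_mul a).add ((hasDerivAt_id x).const_mul b)
  simp only [← div_eq_mul_inv, id, mul_one] at this
  exact this.congr_deriv (by ring)

theorem deriv_deriv_exp_mul {U : Set ℂ} (hU : IsOpen U) {Φ W f f' : ℂ → ℂ} {z w' f'' : ℂ}
    (hz : z ∈ U) (hΦ : ∀ x ∈ U, HasDerivAt Φ (W x) x) (hf : ∀ x ∈ U, HasDerivAt f (f' x) x)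
    (hW : HasDerivAt W w' z) (hf' : HasDerivAt f' f'' z) :
    deriv (deriv fun x => exp (Φ x) * f x) z
      = exp (Φ z) * (f'' + 2 * W z * f' z + (w' + W z ^ 2) * f z) := by
  have hderiv : deriv (fun x => exp (Φ x) * f x) =ᶠ[𝓝 z]
      fun x => exp (Φ x) * (f' x + W x * f x) :=
    eventually_of_mem (hU.mem_nhds hz) fun x hx =>
      (((hΦ x hx).cexp.mul (hf x hx)).congr_deriv (by ring)).deriv
  rw [hderiv.deriv_eq]
  exact (((hΦ z hz).cexp.mul (hf'.add (hW.mul (hf z hz)))).congr_deriv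
    (by simp only [Pi.add_apply, Pi.mul_apply]; ring)).deriv

theorem gauged_ode_of_laguerre {α lam E z g₀ g₁ g₂ : ℂ} (hlam : lam ≠ 0) (hz : z ≠ 0)
    (h : -lam * z ^ 2 * g₂ + (α + 1 / 2 - -lam * z ^ 2) * g₁ = E ^ 2 / (4 * lam) * g₀) :
    2 * -lam * g₁ + (2 * -lam * z) ^ 2 * g₂ + 2 * (α / z + lam * z) * (2 * -lam * z * g₁)
      + E ^ 2 * g₀ = 0 := by
  rw [div_mul_eq_mul_div, eq_div_iff (by simpa using hlam)] at h
  linear_combination (-1) * h - 4 * lam * α * g₁ * mul_inv_cancel₀ hz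

theorem laguerre_reduction_general (α lam E : ℂ) (hlam : lam ≠ 0)
    (g : ℂ → ℂ) (hg1 : Differentiable ℂ g) (hg2 : Differentiable ℂ (deriv g))
    (hg : ∀ u : ℂ, u * deriv (deriv g) u + (α + 1 / 2 - u) * deriv g u
      = (E ^ 2 / (4 * lam)) * g u)
    (U : Set ℂ) (hU : IsOpen U) (hU0 : (0 : ℂ) ∉ U)
    (L : ℂ → ℂ)
    (hL' : ∀ z ∈ U, HasDerivAt L (1 / z) z)
    (V ψ : ℂ → ℂ)
    (hV : ∀ z : ℂ, z ≠ 0 → V z = α / z + lam * z)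
    (hψ : ∀ z ∈ U, ψ z = Complex.exp (α * L z) * Complex.exp (lam * z ^ 2 / 2)
      * g (-lam * z ^ 2)) :
    ∀ z ∈ U, deriv (deriv ψ) z = (V z ^ 2 + deriv V z - E ^ 2) * ψ z := by
  intro z hz
  have hz0 : z ≠ 0 := ne_of_mem_of_not_mem hz hU0
  have hΦ : ∀ x ∈ U, HasDerivAt (fun y => α * L y + lam * y ^ 2 / 2) (α / x + lam * x) x :=
    fun x hx => (((hL' x hx).const_mul α).add
      (((hasDerivAt_pow 2 x).const_mul lam).div_const 2)).congr_deriv (by push_cast; ring)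
  have hψ_eq : ψ =ᶠ[𝓝 z] fun x => exp (α * L x + lam * x ^ 2 / 2) * g (-lam * x ^ 2) :=
    eventually_of_mem (hU.mem_nhds hz) fun x hx => (hψ x hx).trans (by simp only [exp_add])
  have hV_eq : V =ᶠ[𝓝 z] fun x => α / x + lam * x :=
    eventually_of_mem (isOpen_compl_singleton.mem_nhds hz0) hV
  rw [hψ_eq.deriv.deriv_eq, hV_eq.deriv_eq, (hasDerivAt_div_add_mul α lam hz0).deriv,
    deriv_deriv_exp_mul hU hz hΦ (fun x _ => (hg1 _).hasDerivAt.comp_const_mul_sq (-lam) x)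
      (hasDerivAt_div_add_mul α lam hz0)
      ((hg2 _).hasDerivAt.mul_comp_const_mul_sq (-lam) z), hV z hz0, hψ z hz, ← exp_add]
  linear_combination exp (α * L z + lam * z ^ 2 / 2) *
    gauged_ode_of_laguerre hlam hz0 (hg (-lam * z ^ 2))

/-- Laguerre reduction of the Dirac equation for V(z) = α/z + λz: if g solves the
associated Laguerre equation u g'' + (α + 1/2 − u) g' = (E²/(4λ)) g and
ψ(z) = z^α e^{−u/2} g(u) with u = −λz² (fixed branch of z^α via a branch L of log on an
open set U ⊆ ℂ \ {0}), then ψ'' = (V² + V' − E²)ψ on U. -/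
theorem laguerre_reduction (α lam E : ℂ) (hlam : lam ≠ 0)
    (g : ℂ → ℂ) (hg1 : Differentiable ℂ g) (hg2 : Differentiable ℂ (deriv g))
    (hg : ∀ u : ℂ, u * deriv (deriv g) u + (α + 1 / 2 - u) * deriv g u
      = (E ^ 2 / (4 * lam)) * g u)
    (U : Set ℂ) (hU : IsOpen U) (hU0 : (0 : ℂ) ∉ U)
    (L : ℂ → ℂ) (hL : ∀ z ∈ U, Complex.exp (L z) = z)
    (hL' : ∀ z ∈ U, HasDerivAt L (1 / z) z)
    (V ψ : ℂ → ℂ)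
    (hV : ∀ z : ℂ, z ≠ 0 → V z = α / z + lam * z)
    (hψ : ∀ z ∈ U, ψ z = Complex.exp (α * L z) * Complex.exp (lam * z ^ 2 / 2)
      * g (-lam * z ^ 2)) :
    ∀ z ∈ U, deriv (deriv ψ) z = (V z ^ 2 + deriv V z - E ^ 2) * ψ z :=
  laguerre_reduction_general α lam E hlam g hg1 hg2 hg U hU hU0 L hL' V ψ hV hψ
end

section
/- Let α, m, λ, E ∈ ℂ with λ ≠ 0, let V(z) = α/z + m + λz, and let ω(z) = α/z + m + λz. Suppose ψ(z) = P(z) exp(∫ ω dz) with P a polynomial. Then ψ'' = (V² + V' − E²)ψ holds if and only if P satisfies P''(z) + 2(α/z + m + λz) P'(z) = −(E² ) P(z) + 0, i.e. z P'' + 2(α + mz + λz²) P' + E² z P = 0; and if P is a nonzero polynomial solution of degree d, then necessarily E² = −2λ d. -/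
/-!
Writing `ψ = P Φ` with `Φ' = ω Φ` turns `ψ''` into `(P'' + 2ωP' + (ω' + ω²)P) Φ`, so with `V = ω`
the Schrödinger equation `ψ'' = (V² + V' − E²)ψ` is `P'' + 2ωP' + E²P = 0`; multiplying by `z` gives
the biconfluent Heun equation. In that equation the coefficient of `z^(d+1)` for `P` of degree `d`
is `(2λd + E²)` times the leading coefficient of `P`, which forces `E² = −2λd`.
-/

open Polynomial

namespace Polynomial

variable {R : Type*} [CommRing R]

theorem coeff_X_mul_derivative (P : R[X]) (n : ℕ) :
    (X * derivative P).coeff n = n * P.coeff n := by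
  cases n with
  | zero => simp
  | succ n => rw [coeff_X_mul, coeff_derivative]; push_cast; ring

noncomputable def heunOperator (a b c e : R) (P : R[X]) : R[X] :=
  X * derivative (derivative P) + 2 * (C a + C b * X + C c * X ^ 2) * derivative P + C e * X * P

theorem eval_heunOperator (a b c e : R) (P : R[X]) (z : R) :
    (heunOperator a b c e P).eval z = z * (derivative (derivative P)).eval z
      + 2 * (a + b * z + c * z ^ 2) * (derivative P).eval z + e * z * P.eval z := by
  simp [heunOperator]

theorem coeff_heunOperator_natDegree_succ (a b c e : R) (P : R[X]) :
    (heunOperator a b c e P).coeff (P.natDegree + 1)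
      = (2 * c * P.natDegree + e) * P.leadingCoeff := by
  set d := P.natDegree
  have hsplit : heunOperator a b c e P = C (2 * a) * derivative P + X *
      (derivative (derivative P) + C (2 * b) * derivative P
        + C (2 * c) * (X * derivative P) + C e * P) := by
    simp only [heunOperator, map_mul, map_ofNat]; ring
  have hvanish : ∀ k, d < k → P.coeff k = 0 := fun k hk => coeff_eq_zero_of_natDegree_lt hk
  rw [hsplit, coeff_add, coeff_C_mul, coeff_X_mul]
  simp only [coeff_add, coeff_C_mul, coeff_X_mul_derivative, coeff_derivative,
    hvanish (d + 1 + 1) (by omega), hvanish (d + 1) (by omega), leadingCoeff]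
  ring

theorem eq_neg_mul_natDegree_of_heunOperator_eq_zero [NoZeroDivisors R] {a b c e : R}
    {P : R[X]} (hP : P ≠ 0) (h : heunOperator a b c e P = 0) :
    e = -2 * c * P.natDegree := by
  have hlead := coeff_heunOperator_natDegree_succ a b c e P
  rw [h, coeff_zero, eq_comm, mul_eq_zero, or_iff_left (leadingCoeff_ne_zero.mpr hP)] at hlead
  linear_combination hlead

theorem eval_heunOperator_eq_mul {K : Type*} [Field K] {α m lam e z : K} (P : K[X])
    (hz : z ≠ 0) :
    (heunOperator α m lam e P).eval z = z * ((derivative (derivative P)).eval z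
      + 2 * (α / z + m + lam * z) * (derivative P).eval z + e * P.eval z) := by
  rw [eval_heunOperator]
  field_simp

end Polynomial

section

variable {𝕜 : Type*} [NontriviallyNormedField 𝕜] {U : Set 𝕜} {f f' f'' Φ ω ω' : 𝕜 → 𝕜}

theorem deriv_deriv_mul_of_hasDerivAt_eq_mul (hU : IsOpen U)
    (hf : ∀ z ∈ U, HasDerivAt f (f' z) z) (hf' : ∀ z ∈ U, HasDerivAt f' (f'' z) z)
    (hω : ∀ z ∈ U, HasDerivAt ω (ω' z) z) (hΦ : ∀ z ∈ U, HasDerivAt Φ (ω z * Φ z) z)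
    {z : 𝕜} (hz : z ∈ U) :
    deriv (deriv fun y => f y * Φ y) z
      = (f'' z + 2 * ω z * f' z + (ω' z + ω z ^ 2) * f z) * Φ z := by
  have hfirst : deriv (fun y => f y * Φ y) =ᶠ[nhds z] fun y => (f' y + ω y * f y) * Φ y := by
    filter_upwards [hU.mem_nhds hz] with y hy
    exact ((hf y hy).mul (hΦ y hy)).deriv.trans (by ring)
  rw [hfirst.deriv_eq]
  exact (((hf' z hz).add ((hω z hz).mul (hf z hz))).mul (hΦ z hz)).deriv.trans
    (by simp only [Pi.add_apply, Pi.mul_apply]; ring)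

theorem hasDerivAt_div_add_add_mul {α m lam z : 𝕜} (hz : z ≠ 0) :
    HasDerivAt (fun y => α / y + m + lam * y) (-α / z ^ 2 + lam) z := by
  have h : HasDerivAt (fun y => α * y⁻¹ + m + lam * y) (α * -(z ^ 2)⁻¹ + lam * 1) z :=
    (((hasDerivAt_inv hz).const_mul α).add_const m).add ((hasDerivAt_id z).const_mul lam)
  simpa [div_eq_mul_inv] using h

end

theorem mul_eq_sq_add_sub_mul_mul_iff {K : Type*} [Field K] {f f' f'' w w' e Φ : K}
    (hΦ : Φ ≠ 0) :
    (f'' + 2 * w * f' + (w' + w ^ 2) * f) * Φ = (w ^ 2 + w' - e) * (f * Φ)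
      ↔ f'' + 2 * w * f' + e * f = 0 := by
  rw [← sub_eq_zero, show (f'' + 2 * w * f' + (w' + w ^ 2) * f) * Φ - (w ^ 2 + w' - e) * (f * Φ)
    = (f'' + 2 * w * f' + e * f) * Φ by ring, mul_eq_zero, or_iff_left hΦ]

theorem kovacic_subcase1_quantization_general (α m lam E : ℂ)
    (d : ℕ) (P : Polynomial ℂ) (hP : P ≠ 0)
    (V ω : ℂ → ℂ)
    (hV : ∀ z : ℂ, z ≠ 0 → V z = α / z + m + lam * z)
    (hω : ∀ z : ℂ, z ≠ 0 → ω z = α / z + m + lam * z)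
    (U : Set ℂ) (hU : IsOpen U) (hU0 : (0 : ℂ) ∉ U)
    (Φ : ℂ → ℂ) (hΦ0 : ∀ z ∈ U, Φ z ≠ 0)
    (hΦ : ∀ z ∈ U, HasDerivAt Φ (ω z * Φ z) z)
    (ψ : ℂ → ℂ) (hψ : ∀ z : ℂ, ψ z = P.eval z * Φ z) :
    ((∀ z ∈ U, deriv (deriv ψ) z = (V z ^ 2 + deriv V z - E ^ 2) * ψ z) ↔
        (∀ z ∈ U, z * (P.derivative.derivative).eval z
          + 2 * (α + m * z + lam * z ^ 2) * P.derivative.eval z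
          + E ^ 2 * z * P.eval z = 0)) ∧
      (P.natDegree = d →
        (∀ z : ℂ, z * (P.derivative.derivative).eval z
          + 2 * (α + m * z + lam * z ^ 2) * P.derivative.eval z
          + E ^ 2 * z * P.eval z = 0) →
        E ^ 2 = -2 * lam * d) := by
  have hne : ∀ z ∈ U, z ≠ 0 := fun z hz h => hU0 (h ▸ hz)
  have hψ'' : ∀ z ∈ U, deriv (deriv ψ) z = ((derivative (derivative P)).eval z
      + 2 * (α / z + m + lam * z) * (derivative P).eval z
      + ((-α / z ^ 2 + lam) + (α / z + m + lam * z) ^ 2) * P.eval z) * Φ z := by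
    intro z hz
    rw [funext hψ]
    refine deriv_deriv_mul_of_hasDerivAt_eq_mul hU (fun y _ => P.hasDerivAt y)
      (fun y _ => (derivative P).hasDerivAt y) (fun y hy => hasDerivAt_div_add_add_mul (hne y hy))
      (fun y hy => ?_) hz
    simpa only [hω y (hne y hy)] using hΦ y hy
  have hV' : ∀ z ∈ U, deriv V z = -α / z ^ 2 + lam := fun z hz =>
    ((hasDerivAt_div_add_add_mul (hne z hz)).congr_of_eventuallyEq
      (eventually_ne_nhds (hne z hz) |>.mono hV)).deriv
  constructor
  · refine forall₂_congr fun z hz => ?_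
    rw [hψ'' z hz, hV' z hz, hV z (hne z hz), hψ, mul_eq_sq_add_sub_mul_mul_iff (hΦ0 z hz),
      ← eval_heunOperator, eval_heunOperator_eq_mul P (hne z hz), mul_eq_zero,
      or_iff_right (hne z hz)]
  · rintro rfl hheun
    exact eq_neg_mul_natDegree_of_heunOperator_eq_zero hP
      (Polynomial.funext fun z => by simpa only [eval_heunOperator, eval_zero] using hheun z)

/-- First Kovacic subcase for V = α/z + m + λz, ω = V: with ψ = P·Φ where Φ' = ωΦ,
Φ ≠ 0 on an open nonempty U ⊆ ℂ \ {0}, the equation ψ'' = (V² + V' − E²)ψ holds on U iff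
zP'' + 2(α + mz + λz²)P' + E²zP = 0 on U; and any nonzero polynomial solution of
degree d forces E² = −2λd. -/
theorem kovacic_subcase1_quantization (α m lam E : ℂ) (hlam : lam ≠ 0)
    (d : ℕ) (P : Polynomial ℂ) (hP : P ≠ 0)
    (V ω : ℂ → ℂ)
    (hV : ∀ z : ℂ, z ≠ 0 → V z = α / z + m + lam * z)
    (hω : ∀ z : ℂ, z ≠ 0 → ω z = α / z + m + lam * z)
    (U : Set ℂ) (hU : IsOpen U) (hUne : U.Nonempty) (hU0 : (0 : ℂ) ∉ U)
    (Φ : ℂ → ℂ) (hΦ0 : ∀ z ∈ U, Φ z ≠ 0)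
    (hΦ : ∀ z ∈ U, HasDerivAt Φ (ω z * Φ z) z)
    (ψ : ℂ → ℂ) (hψ : ∀ z : ℂ, ψ z = P.eval z * Φ z) :
    ((∀ z ∈ U, deriv (deriv ψ) z = (V z ^ 2 + deriv V z - E ^ 2) * ψ z) ↔
        (∀ z ∈ U, z * (P.derivative.derivative).eval z
          + 2 * (α + m * z + lam * z ^ 2) * P.derivative.eval z
          + E ^ 2 * z * P.eval z = 0)) ∧
      (P.natDegree = d →
        (∀ z : ℂ, z * (P.derivative.derivative).eval z
          + 2 * (α + m * z + lam * z ^ 2) * P.derivative.eval z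
          + E ^ 2 * z * P.eval z = 0) →
        E ^ 2 = -2 * lam * d) :=
  kovacic_subcase1_quantization_general α m lam E d P hP V ω hV hω U hU hU0 Φ hΦ0 hΦ ψ hψ
end

section
/- Fix d ∈ ℕ and λ > 0, and define real polynomials in α (subcase 2 rescaled limit m → ∞): r_{d} = 1, and for decreasing l the two-term recurrence −2(l + 2α − 1) r_{l−1} = 2λ(l − d − 2) r_{l−2}. Then r_{−1} (reached from r_d through d+1 steps) is, up to a nonzero constant, ∏_{l=1}^{d+1} (l + 2α − 1); hence it has exactly d + 1 distinct real simple roots α = (1 − l)/2 for l = 1, …, d+1. -/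
open Finset

/-- Large-m limit of subcase 2: with r_d = 1 and the two-term recurrence
−2(l+2α−1)r_{l−1} = 2λ(l−d−2)r_{l−2}, the last polynomial r_{−1} equals, up to a nonzero
constant, ∏_{l=1}^{d+1}(l+2α−1); hence it has exactly the d+1 distinct real simple roots
α = (1−l)/2 for l = 1, …, d+1. -/
theorem large_m_limit_subcase2 (d : ℕ) (lam : ℝ) (hlam : 0 < lam)
    (r : ℝ → ℤ → ℝ)
    (hdd : ∀ α : ℝ, r α (d : ℤ) = 1)
    (hrec : ∀ α : ℝ, ∀ l : ℤ, 1 ≤ l → l ≤ (d : ℤ) + 1 →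
      -2 * ((l : ℝ) + 2 * α - 1) * r α (l - 1)
        = 2 * lam * ((l : ℝ) - (d : ℝ) - 2) * r α (l - 2)) :
    ∃ C : ℝ, C ≠ 0 ∧
      (∀ α : ℝ, r α (-1) = C * ∏ l ∈ Icc 1 (d + 1), ((l : ℝ) + 2 * α - 1)) ∧
      (∀ α : ℝ, r α (-1) = 0 ↔ ∃ l : ℕ, 1 ≤ l ∧ l ≤ d + 1 ∧ α = (1 - (l : ℝ)) / 2) := by
  have key : ∀ n : ℕ, n ≤ d + 1 → ∃ C : ℝ, C ≠ 0 ∧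
      ∀ α : ℝ, r α ((d : ℤ) - n) = C * ∏ l ∈ Icc (d + 2 - n) (d + 1), ((l : ℝ) + 2 * α - 1) := by
    intro n
    induction n with
    | zero =>
      intro _
      refine ⟨1, one_ne_zero, fun α => ?_⟩
      rw [Finset.Icc_eq_empty (by omega)]
      simpa using hdd α
    | succ n ih =>
      intro hn1
      have hn : n ≤ d := by omega
      obtain ⟨C, hC, hr⟩ := ih (by omega)
      refine ⟨C * (1 / (lam * (n + 1))), ?_, fun α => ?_⟩
      · exact mul_ne_zero hC (one_div_ne_zero (by positivity))
      · have hrec' := hrec α ((d : ℤ) + 1 - n) (by omega) (by omega)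
        have hcast : (((d : ℤ) + 1 - n : ℤ) : ℝ) = (d : ℝ) + 1 - n := by push_cast; ring
        rw [hcast] at hrec'
        have e1 : (d : ℤ) + 1 - n - 1 = (d : ℤ) - n := by ring
        have e2 : (d : ℤ) + 1 - n - 2 = (d : ℤ) - (n + 1 : ℕ) := by push_cast; ring
        rw [e1, e2, hr α] at hrec'
        have hcoef : (2 : ℝ) * lam * ((d : ℝ) + 1 - n - d - 2) = -2 * (lam * (n + 1)) := by
          ring
        rw [hcoef] at hrec'
        have hne : (-2 : ℝ) * (lam * (n + 1)) ≠ 0 := by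
          have : lam * (n + 1) ≠ 0 := by positivity
          simpa using this
        have hval : r α ((d : ℤ) - (n + 1 : ℕ)) =
            -2 * (((d : ℝ) + 1 - n) + 2 * α - 1) * (C * ∏ l ∈ Icc (d + 2 - n) (d + 1),
              ((l : ℝ) + 2 * α - 1)) / (-2 * (lam * (n + 1))) := by
          field_simp at hrec' ⊢
          linarith [hrec']
        rw [hval]
        have hsplit : ∏ l ∈ Icc (d + 1 - n) (d + 1), ((l : ℝ) + 2 * α - 1)
            = (((d + 1 - n : ℕ) : ℝ) + 2 * α - 1) *
              ∏ l ∈ Icc (d + 2 - n) (d + 1), ((l : ℝ) + 2 * α - 1) := by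
          have h1 : Icc (d + 1 - n) (d + 1) = insert (d + 1 - n) (Icc (d + 2 - n) (d + 1)) := by
            have : d + 2 - n = (d + 1 - n) + 1 := by omega
            rw [this, Finset.Icc_add_one_left_eq_Ioc, Finset.Ioc_insert_left (by omega)]
          rw [h1, Finset.prod_insert (by simp only [Finset.mem_Icc]; omega)]
        have hb : d + 2 - (n + 1) = d + 1 - n := by omega
        rw [hb, hsplit]
        have hc : ((d + 1 - n : ℕ) : ℝ) = (d : ℝ) + 1 - n := by
          push_cast [Nat.cast_sub (by omega : n ≤ d + 1)]; ring
        rw [hc]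
        have hne2 : lam * ((n : ℝ) + 1) ≠ 0 := by positivity
        field_simp
  obtain ⟨C, hC, hr⟩ := key (d + 1) le_rfl
  have he : (d : ℤ) - (d + 1 : ℕ) = -1 := by push_cast; ring
  have hb : d + 2 - (d + 1) = 1 := by omega
  rw [he, hb] at hr
  refine ⟨C, hC, hr, fun α => ?_⟩
  rw [hr α, mul_eq_zero, Finset.prod_eq_zero_iff]
  constructor
  · rintro (h | ⟨l, hl, hl0⟩)
    · exact absurd h hC
    · simp only [Finset.mem_Icc] at hl
      exact ⟨l, hl.1, hl.2, by linarith⟩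
  · rintro ⟨l, h1, h2, rfl⟩
    exact Or.inr ⟨l, Finset.mem_Icc.mpr ⟨h1, h2⟩, by ring⟩
end

section
/- Let p, q, r : ℝ → ℝ be real polynomials satisfying a pointwise relation A(x)·p(x) = −B(x)·r(x) at every root x of q, where A, B are real-valued functions that are strictly positive on an interval I containing all roots of q. If q has k distinct roots in I at which p alternates in sign (all values nonzero), then r also alternates in sign at these k roots, and hence r has at least k − 1 roots interlaced between consecutive roots of q. -/
/-- Induction step of the separation property: if A·p = −B·r at every root of q, with
A, B > 0 on an interval I containing all roots of q, and p alternates in sign at k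
distinct roots of q, then r alternates (with opposite sign) at these roots and has at
least one root strictly between each pair of consecutive ones. -/
theorem alternation_propagation (p q r : Polynomial ℝ) (A B : ℝ → ℝ) (I : Set ℝ)
    (hI : ∀ x : ℝ, q.eval x = 0 → x ∈ I)
    (hA : ∀ x ∈ I, 0 < A x) (hB : ∀ x ∈ I, 0 < B x)
    (hrel : ∀ x : ℝ, q.eval x = 0 → A x * p.eval x = -(B x * r.eval x))
    (k : ℕ) (a : Fin k → ℝ) (ha : StrictMono a)
    (hq : ∀ i, q.eval (a i) = 0)
    (s : ℝ) (hs : s = 1 ∨ s = -1)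
    (halt : ∀ i : Fin k, 0 < (-1 : ℝ) ^ (i : ℕ) * s * p.eval (a i)) :
    (∀ i : Fin k, 0 < (-1 : ℝ) ^ ((i : ℕ) + 1) * s * r.eval (a i)) ∧
      (∀ i : Fin k, ∀ h : (i : ℕ) + 1 < k,
        ∃ x : ℝ, a i < x ∧ x < a ⟨(i : ℕ) + 1, h⟩ ∧ r.eval x = 0) := by
  have hr : ∀ i : Fin k, 0 < (-1 : ℝ) ^ ((i : ℕ) + 1) * s * r.eval (a i) := by
    intro i
    have hmem := hI _ (hq i)
    have hAx := hA _ hmem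
    have hBx := hB _ hmem
    have hx := hrel _ (hq i)
    have h1 : 0 < A (a i) * ((-1 : ℝ) ^ (i : ℕ) * s * p.eval (a i)) :=
      mul_pos hAx (halt i)
    have h2 : B (a i) * ((-1 : ℝ) ^ ((i : ℕ) + 1) * s * r.eval (a i))
        = A (a i) * ((-1 : ℝ) ^ (i : ℕ) * s * p.eval (a i)) := by
      rw [pow_succ]
      linear_combination (-((-1 : ℝ) ^ (i : ℕ) * s)) * hx
    by_contra hcon
    push_neg at hcon
    nlinarith [mul_nonpos_of_nonneg_of_nonpos hBx.le hcon]
  refine ⟨hr, fun i h => ?_⟩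
  set j : Fin k := ⟨(i : ℕ) + 1, h⟩ with hj
  have hij : a i < a j := ha (by simp [hj, Fin.lt_def])
  have hri := hr i
  have hrj := hr j
  have hjv : ((j : ℕ) : ℕ) = (i : ℕ) + 1 := rfl
  rw [hjv] at hrj
  have hs2 : s * s = 1 := by rcases hs with h'|h' <;> simp [h']
  have hpow : ((-1 : ℝ)) ^ ((i : ℕ) + 1) * (-1) ^ ((i : ℕ) + 1 + 1) = -1 := by
    rw [← pow_add]
    exact Odd.neg_one_pow ⟨(i : ℕ) + 1, by ring⟩
  have hprod : r.eval (a i) * r.eval (a j) < 0 := by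
    have hmul := mul_pos hri hrj
    have heq : ((-1 : ℝ) ^ ((i : ℕ) + 1) * s * r.eval (a i)) *
        ((-1 : ℝ) ^ ((i : ℕ) + 1 + 1) * s * r.eval (a j))
        = ((-1 : ℝ) ^ ((i : ℕ) + 1) * (-1) ^ ((i : ℕ) + 1 + 1)) *
          ((s * s) * (r.eval (a i) * r.eval (a j))) := by ring
    rw [heq, hpow, hs2] at hmul
    linarith
  have hcont : ContinuousOn (fun x => r.eval x) (Set.Icc (a i) (a j)) :=
    r.continuous.continuousOn
  rcases lt_or_ge (r.eval (a i)) 0 with hneg | hpos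
  · have hrjpos : 0 < r.eval (a j) := by nlinarith
    obtain ⟨x, hx1, hx2⟩ :=
      intermediate_value_Ioo hij.le hcont (show (0 : ℝ) ∈ Set.Ioo _ _ from ⟨hneg, hrjpos⟩)
    exact ⟨x, hx1.1, hx1.2, hx2⟩
  · have hripos : 0 < r.eval (a i) := lt_of_le_of_ne hpos (by intro h'; rw [← h'] at hprod; simp at hprod)
    have hrjneg : r.eval (a j) < 0 := by nlinarith
    obtain ⟨x, hx1, hx2⟩ :=
      intermediate_value_Ioo' hij.le hcont (show (0 : ℝ) ∈ Set.Ioo _ _ from ⟨hrjneg, hripos⟩)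
    exact ⟨x, hx1.1, hx1.2, hx2⟩
end

section
/- Fix an odd positive integer d and α, λ ∈ ℂ, λ ≠ 0. Define p_l by p_{d+1} = 0, p_d = 1 and the two-term recurrence (subcase 4 with m = 0): l(l + 1 − 2α) p_l = 2λ(d − l + 2) p_{l−2}. Then p_{−1} = ∏_{n=0}^{(d−1)/2} [(2n+1)(n + 1 − α)] / [λ(d − 2n + 1)], so as a polynomial in α it has exactly (d+1)/2 simple roots α = n + 1 for n = 0, 1, …, (d−1)/2; in particular α = (d+1)/2 is always a root. -/
open Finset

/-- For odd d and m = 0 (subcase 4), the two-term recurrence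
l(l+1−2α)p_l = 2λ(d−l+2)p_{l−2} with p_{d+1} = 0, p_d = 1 yields
p_{−1} = ∏_{n=0}^{(d−1)/2} (2n+1)(n+1−α)/(λ(d−2n+1)); its roots in α are exactly
α = n+1 for n = 0, …, (d−1)/2; in particular α = (d+1)/2 is always a root. -/
theorem odd_degree_product_condition_subcase4 (d : ℕ) (hd : Odd d) (hd0 : 0 < d)
    (lam : ℂ) (hlam : lam ≠ 0)
    (p : ℂ → ℤ → ℂ)
    (htop : ∀ α : ℂ, p α ((d : ℤ) + 1) = 0)
    (hdd : ∀ α : ℂ, p α (d : ℤ) = 1)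
    (hrec : ∀ α : ℂ, ∀ l : ℤ, l ≤ (d : ℤ) + 1 →
      (l : ℂ) * ((l : ℂ) + 1 - 2 * α) * p α l
        = 2 * lam * ((d : ℂ) - (l : ℂ) + 2) * p α (l - 2)) :
    (∀ α : ℂ, p α (-1)
        = ∏ n ∈ range ((d - 1) / 2 + 1),
            ((2 * (n : ℂ) + 1) * ((n : ℂ) + 1 - α)) / (lam * ((d : ℂ) - 2 * n + 1))) ∧
      (∀ α : ℂ, p α (-1) = 0 ↔ ∃ n : ℕ, n ≤ (d - 1) / 2 ∧ α = (n : ℂ) + 1) ∧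
      (∀ α : ℂ, α = ((d : ℂ) + 1) / 2 → p α (-1) = 0) := by
  obtain ⟨N, hN⟩ := hd
  have hNd : (d - 1) / 2 = N := by omega
  have hdC : (d : ℂ) = 2 * N + 1 := by push_cast [hN]; ring
  have h2j : ∀ j : ℕ, (2*(j:ℂ)+2) ≠ 0 := by
    intro j
    have : (2*(j:ℂ)+2) = ((2*j+2 : ℕ) : ℂ) := by push_cast; ring
    rw [this]
    exact Nat.cast_ne_zero.mpr (by omega)
  -- main recurrence formula
  have key : ∀ α : ℂ, ∀ k : ℕ, k ≤ N + 1 →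
      p α ((d : ℤ) - 2 * k) = ∏ j ∈ range k,
        (((d:ℂ) - 2*j) * ((d:ℂ) - 2*j + 1 - 2*α)) / (2*lam*(2*(j:ℂ)+2)) := by
    intro α k
    induction k with
    | zero => intro _; simpa using hdd α
    | succ k ih =>
      intro hk
      have h1 := hrec α ((d:ℤ) - 2*k) (by omega)
      have hcast : ((((d:ℤ) - 2*(k:ℤ)) : ℤ) : ℂ) = (d:ℂ) - 2*k := by push_cast; ring
      rw [hcast] at h1
      have hden : 2*lam*(2*(k:ℂ)+2) ≠ 0 := by
        have := h2j k
        exact mul_ne_zero (mul_ne_zero two_ne_zero hlam) this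
      have h2 : p α ((d:ℤ) - 2*(k:ℤ) - 2)
          = ((d:ℂ)-2*k)*((d:ℂ)-2*k+1-2*α) * p α ((d:ℤ)-2*k) / (2*lam*(2*(k:ℂ)+2)) := by
        rw [eq_div_iff hden]
        linear_combination -h1
      have hk' : k ≤ N + 1 := by omega
      have harg : (d:ℤ) - 2*((k+1 : ℕ):ℤ) = (d:ℤ) - 2*(k:ℤ) - 2 := by push_cast; ring
      rw [harg, h2, ih hk', prod_range_succ]
      ring
  have hm1 : ∀ α : ℂ, p α (-1) = ∏ j ∈ range (N+1),
      (((d:ℂ) - 2*j) * ((d:ℂ) - 2*j + 1 - 2*α)) / (2*lam*(2*(j:ℂ)+2)) := by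
    intro α
    have hix : (d:ℤ) - 2*((N+1 : ℕ):ℤ) = -1 := by push_cast; omega
    rw [← hix]
    exact key α (N+1) le_rfl
  have hprod : ∀ α : ℂ, p α (-1)
      = ∏ n ∈ range ((d - 1) / 2 + 1),
          ((2 * (n : ℂ) + 1) * ((n : ℂ) + 1 - α)) / (lam * ((d : ℂ) - 2 * n + 1)) := by
    intro α
    rw [hm1 α, hNd,
      ← prod_range_reflect (fun n : ℕ => ((2 * (n : ℂ) + 1) * ((n : ℂ) + 1 - α)) / (lam * ((d : ℂ) - 2 * n + 1))) (N+1)]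
    refine prod_congr rfl ?_
    intro j hj
    have hjN : j ≤ N := by simpa [Nat.lt_succ_iff] using hj
    simp only [Nat.add_sub_cancel]
    rw [Nat.cast_sub hjN, hdC]
    rw [div_eq_div_iff (mul_ne_zero (mul_ne_zero two_ne_zero hlam) (h2j j))
      (by rw [show lam * (2*(N:ℂ)+1 - 2*((N:ℂ)-j) + 1) = lam * (2*(j:ℂ)+2) by ring]
          exact mul_ne_zero hlam (h2j j))]
    ring
  refine ⟨hprod, ?_, ?_⟩
  · intro α
    rw [hprod α, hNd, prod_eq_zero_iff]
    constructor
    · rintro ⟨n, hn, h0⟩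
      have hnN : n ≤ N := by simpa [Nat.lt_succ_iff] using hn
      rcases div_eq_zero_iff.mp h0 with hA | hB
      · rcases mul_eq_zero.mp hA with h' | h'
        · exfalso
          have hz : ((2*n+1 : ℕ):ℂ) = 0 := by push_cast; linear_combination h'
          exact Nat.cast_ne_zero.mpr (by omega) hz
        · exact ⟨n, hnN, by linear_combination -h'⟩
      · exfalso
        have : (d:ℂ) - 2*n + 1 ≠ 0 := by
          rw [hdC, show (2*(N:ℂ)+1 - 2*n + 1) = 2*((N:ℂ)-n)+2 by ring,
            ← Nat.cast_sub hnN]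
          exact h2j (N - n)
        exact (mul_ne_zero hlam this) hB
    · rintro ⟨n, hn, hα⟩
      refine ⟨n, by simp [Nat.lt_succ_iff, hn], ?_⟩
      rw [hα]
      simp
  · intro α hα
    rw [hprod α]
    apply prod_eq_zero (i := (d-1)/2) (by simp)
    rw [hα, hdC, hNd]
    field_simp
    ring
end
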